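/- Let A = ℤ[1/2][i, x, y, z]/(i² + 1, x² + y² + z² − 1) and let σ be the unique ℤ[1/2]-algebra involution of A with σ(i) = −i, σ(x) = −x, σ(y) = −y, σ(z) = −z. Then the ℤ[1/2]-algebra homomorphism f : ℤ[1/2][x', y', z']/((x')² + (y')² + (z')² + 1) → A determined by x' ↦ ix, y' ↦ iy, z' ↦ iz is injective and its image is the fixed subring A^σ = {a ∈ A : σ(a) = a}. -/

import Mathlib

/-!
Statement 11: Let `A = ℤ[1/2][i,x,y,z]/(i²+1, x²+y²+z²−1)` and let `σ` be the (unique)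
`ℤ[1/2]`-algebra involution of `A` with `σ(i) = −i`, `σ(x) = −x`, `σ(y) = −y`,
`σ(z) = −z`. Then the `ℤ[1/2]`-algebra homomorphism
`f : ℤ[1/2][x',y',z']/((x')²+(y')²+(z')²+1) → A` determined by `x' ↦ ix`, `y' ↦ iy`,
`z' ↦ iz` is injective and its image is the fixed subring `A^σ = {a : σ a = a}`.

Here `ℤ[1/2]` is formalized as any commutative ring `k` which is a localization of `ℤ`
away from `2` (e.g. `Localization.Away (2 : ℤ)`).
-/

noncomputable section

set_option linter.unusedSectionVars false
set_option linter.unusedVariables false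
set_option synthInstance.maxHeartbeats 1000000
set_option maxHeartbeats 1000000

variable (k : Type) [CommRing k] [Algebra ℤ k] [IsLocalization.Away (2 : ℤ) k]

/-- The ideal `(i² + 1, x² + y² + z² − 1)` of `ℤ[1/2][i,x,y,z]`
(variables `X 0, X 1, X 2, X 3` standing for `i, x, y, z`). -/
abbrev IA : Ideal (MvPolynomial (Fin 4) k) :=
  Ideal.span {MvPolynomial.X 0 ^ 2 + 1,
    MvPolynomial.X 1 ^ 2 + MvPolynomial.X 2 ^ 2 + MvPolynomial.X 3 ^ 2 - 1}

/-- `A = ℤ[1/2][i,x,y,z]/(i²+1, x²+y²+z²−1)`. -/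
abbrev AA : Type := MvPolynomial (Fin 4) k ⧸ IA k

/-- The class of `i` in `A`. -/
abbrev iA : AA k := Ideal.Quotient.mk (IA k) (MvPolynomial.X 0)
/-- The class of `x` in `A`. -/
abbrev xA : AA k := Ideal.Quotient.mk (IA k) (MvPolynomial.X 1)
/-- The class of `y` in `A`. -/
abbrev yA : AA k := Ideal.Quotient.mk (IA k) (MvPolynomial.X 2)
/-- The class of `z` in `A`. -/
abbrev zA : AA k := Ideal.Quotient.mk (IA k) (MvPolynomial.X 3)

/-- The ideal `((x')² + (y')² + (z')² + 1)` of `ℤ[1/2][x',y',z']`. -/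
abbrev IB : Ideal (MvPolynomial (Fin 3) k) :=
  Ideal.span {MvPolynomial.X 0 ^ 2 + MvPolynomial.X 1 ^ 2 + MvPolynomial.X 2 ^ 2 + 1}

/-- `B = ℤ[1/2][x',y',z']/((x')²+(y')²+(z')²+1)`. -/
abbrev BB : Type := MvPolynomial (Fin 3) k ⧸ IB k

/-- The class of `x'` in `B`. -/
abbrev xB : BB k := Ideal.Quotient.mk (IB k) (MvPolynomial.X 0)
/-- The class of `y'` in `B`. -/
abbrev yB : BB k := Ideal.Quotient.mk (IB k) (MvPolynomial.X 1)
/-- The class of `z'` in `B`. -/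
abbrev zB : BB k := Ideal.Quotient.mk (IB k) (MvPolynomial.X 2)

theorem iA_sq : iA k ^ 2 = -1 := by
  have h : (Ideal.Quotient.mk (IA k)) (MvPolynomial.X 0 ^ 2 + 1) = 0 :=
    Ideal.Quotient.eq_zero_iff_mem.2 (Ideal.subset_span (by simp))
  simp only [map_add, map_pow, map_one] at h
  linear_combination h

theorem B_rel : xB k ^ 2 + yB k ^ 2 + zB k ^ 2 + 1 = 0 := by
  have h : (Ideal.Quotient.mk (IB k)) (MvPolynomial.X 0 ^ 2 + MvPolynomial.X 1 ^ 2 +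
      MvPolynomial.X 2 ^ 2 + 1) = 0 :=
    Ideal.Quotient.eq_zero_iff_mem.2 (Ideal.subset_span (by simp))
  simp only [map_add, map_pow, map_one] at h
  exact h

abbrev qC : Polynomial (BB k) := Polynomial.X ^ 2 + 1
abbrev CC : Type := AdjoinRoot (qC k)

theorem algebraMap_CC_inj (b : BB k) (h : algebraMap (BB k) (CC k) b = 0) : b = 0 := by
  by_contra hb
  have : Nontrivial (BB k) := nontrivial_of_ne b 0 hb
  have hmonic : (qC k).Monic := by
    simpa using Polynomial.monic_X_pow_add_C (R := BB k) (a := (1 : BB k)) (n := 2) (by norm_num)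
  have h2 : AdjoinRoot.mk (qC k) (Polynomial.C b) = 0 := h
  rw [AdjoinRoot.mk_eq_zero] at h2
  refine hmonic.not_dvd_of_degree_lt (by simpa using hb) ?_ h2
  rw [Polynomial.degree_C hb]
  have hd : (qC k).degree = 2 := by
    simpa using Polynomial.degree_X_pow_add_C (R := BB k) (n := 2) (by norm_num) 1
  rw [hd]; norm_num

theorem root_sq : (AdjoinRoot.root (qC k)) ^ 2 = -1 := by
  have h := AdjoinRoot.mk_self (f := qC k)
  simp only [map_add, map_pow, map_one, AdjoinRoot.mk_X] at h
  linear_combination h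

def vPhi : Fin 4 → CC k :=
  ![AdjoinRoot.root (qC k),
    -(AdjoinRoot.root (qC k)) * algebraMap (BB k) (CC k) (xB k),
    -(AdjoinRoot.root (qC k)) * algebraMap (BB k) (CC k) (yB k),
    -(AdjoinRoot.root (qC k)) * algebraMap (BB k) (CC k) (zB k)]

def Phi : AA k →ₐ[k] CC k :=
  Ideal.Quotient.liftₐ (IA k) (MvPolynomial.aeval (vPhi k)) (by
    intro a ha
    refine Submodule.span_induction ?_ ?_ ?_ ?_ ha
    · rintro p (rfl | rfl)
      · simp only [map_add, map_pow, map_one, MvPolynomial.aeval_X]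
        show vPhi k 0 ^ 2 + 1 = 0
        simp only [vPhi, Matrix.cons_val_zero]
        linear_combination root_sq k
      · simp only [map_add, map_sub, map_pow, map_one, MvPolynomial.aeval_X]
        show vPhi k 1 ^ 2 + vPhi k 2 ^ 2 + vPhi k 3 ^ 2 - 1 = 0
        simp only [vPhi, Matrix.cons_val_one, Matrix.head_cons, Matrix.cons_val_two,
          Matrix.tail_cons, Matrix.cons_val_three, Matrix.cons_val_zero]
        have h1 : (AdjoinRoot.root (qC k)) ^ 2 = -1 := root_sq k
        have h : algebraMap (BB k) (CC k) (xB k ^ 2 + yB k ^ 2 + zB k ^ 2 + 1) =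
            algebraMap (BB k) (CC k) 0 := congrArg _ (B_rel k)
        rw [map_add, map_add, map_add, map_pow, map_pow, map_pow, map_one, map_zero] at h
        linear_combination (algebraMap (BB k) (CC k) (xB k) ^ 2 +
          algebraMap (BB k) (CC k) (yB k) ^ 2 +
          algebraMap (BB k) (CC k) (zB k) ^ 2) * h1 - h
    · simp
    · intro p q _ _ hp hq; simp [map_add, hp, hq]
    · intro c p _ hp
      simp only [smul_eq_mul, map_mul, hp, mul_zero])

theorem Phi_mk (p : MvPolynomial (Fin 4) k) :
    Phi k (Ideal.Quotient.mk (IA k) p) = MvPolynomial.aeval (vPhi k) p := rfl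

theorem algHom_ext_B {T : Type} [CommRing T] [Algebra k T] (g₁ g₂ : BB k →ₐ[k] T)
    (h0 : g₁ (xB k) = g₂ (xB k)) (h1 : g₁ (yB k) = g₂ (yB k))
    (h2 : g₁ (zB k) = g₂ (zB k)) : g₁ = g₂ := by
  apply Ideal.Quotient.algHom_ext
  apply MvPolynomial.algHom_ext
  intro j
  fin_cases j <;>
    simpa only [AlgHom.comp_apply, Ideal.Quotient.mkₐ_eq_mk] using (by assumption :
      _ = _)

theorem fixed_subring_of_involution
    (σ : AA k →ₐ[k] AA k) (hσ2 : σ.comp σ = AlgHom.id k (AA k))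
    (hσi : σ (iA k) = -iA k) (hσx : σ (xA k) = -xA k)
    (hσy : σ (yA k) = -yA k) (hσz : σ (zA k) = -zA k)
    (f : BB k →ₐ[k] AA k)
    (hfx : f (xB k) = iA k * xA k) (hfy : f (yB k) = iA k * yA k)
    (hfz : f (zB k) = iA k * zA k) :
    Function.Injective f ∧ Set.range f = {a : AA k | σ a = a} := by
  have hi2 : iA k ^ 2 = -1 := iA_sq k
  -- images of the generators under Phi
  have PiA : Phi k (iA k) = AdjoinRoot.root (qC k) := by
    rw [Phi_mk]; simp [vPhi]
  have PxA : Phi k (xA k) = -(AdjoinRoot.root (qC k)) * algebraMap (BB k) (CC k) (xB k) := by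
    rw [Phi_mk]; simp [vPhi]
  have PyA : Phi k (yA k) = -(AdjoinRoot.root (qC k)) * algebraMap (BB k) (CC k) (yB k) := by
    rw [Phi_mk]; simp [vPhi]
  have PzA : Phi k (zA k) = -(AdjoinRoot.root (qC k)) * algebraMap (BB k) (CC k) (zB k) := by
    rw [Phi_mk]; simp [vPhi]
  -- Phi ∘ f = algebraMap B C
  have hPhif : (Phi k).comp f = IsScalarTower.toAlgHom k (BB k) (CC k) := by
    apply algHom_ext_B <;>
      simp only [AlgHom.comp_apply, hfx, hfy, hfz, map_mul, PiA, PxA, PyA, PzA,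
        IsScalarTower.coe_toAlgHom', ] <;>
      first
      | linear_combination (-(algebraMap (BB k) (CC k) (xB k))) * root_sq k
      | linear_combination (-(algebraMap (BB k) (CC k) (yB k))) * root_sq k
      | linear_combination (-(algebraMap (BB k) (CC k) (zB k))) * root_sq k
  have hinj : Function.Injective f := by
    intro b1 b2 hb
    have e1 := DFunLike.congr_fun hPhif b1
    have e2 := DFunLike.congr_fun hPhif b2
    simp only [AlgHom.comp_apply, IsScalarTower.coe_toAlgHom'] at e1 e2
    have h0 : algebraMap (BB k) (CC k) (b1 - b2) = 0 := by
      rw [map_sub, ← e1, ← e2, hb, sub_self]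
    exact sub_eq_zero.mp (algebraMap_CC_inj k _ h0)
  have hσf : σ.comp f = f := by
    apply algHom_ext_B <;>
      simp only [AlgHom.comp_apply, hfx, hfy, hfz, map_mul, hσi, hσx, hσy, hσz] <;> ring
  have hxm : iA k * xA k ∈ f.range := hfx ▸ f.mem_range_self _
  have hym : iA k * yA k ∈ f.range := hfy ▸ f.mem_range_self _
  have hzm : iA k * zA k ∈ f.range := hfz ▸ f.mem_range_self _
  have him : iA k * iA k ∈ f.range := by
    rw [show iA k * iA k = -1 from by linear_combination hi2]
    exact neg_mem (one_mem _)
  have step : ∀ (g b : AA k), σ g = -g → iA k * g ∈ f.range →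
      b + σ b ∈ f.range → iA k * (b - σ b) ∈ f.range →
      (b * g + σ (b * g) ∈ f.range) ∧ (iA k * (b * g - σ (b * g)) ∈ f.range) := by
    intro g b hg hgm h1 h2
    constructor
    · have e : b * g + σ (b * g) = -((iA k * (b - σ b)) * (iA k * g)) := by
        rw [map_mul, hg]
        linear_combination ((b - σ b) * g) * hi2
      rw [e]; exact neg_mem (mul_mem h2 hgm)
    · have e : iA k * (b * g - σ (b * g)) = (iA k * g) * (b + σ b) := by
        rw [map_mul, hg]; ring
      rw [e]; exact mul_mem hgm h1
  have key : ∀ p : MvPolynomial (Fin 4) k,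
      (Ideal.Quotient.mk (IA k) p + σ (Ideal.Quotient.mk (IA k) p)) ∈ f.range ∧
      iA k * (Ideal.Quotient.mk (IA k) p - σ (Ideal.Quotient.mk (IA k) p)) ∈ f.range := by
    intro p
    induction p using MvPolynomial.induction_on with
    | C a =>
      have hCa : (Ideal.Quotient.mk (IA k)) (MvPolynomial.C a) = algebraMap k (AA k) a := by
        rw [← MvPolynomial.algebraMap_eq, ← Ideal.Quotient.mkₐ_eq_mk (R₁ := k), AlgHom.commutes]
      rw [hCa, σ.commutes]
      constructor
      · exact add_mem (f.range.algebraMap_mem a) (f.range.algebraMap_mem a)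
      · rw [sub_self, mul_zero]; exact zero_mem _
    | add p q hp hq =>
      constructor
      · have h := add_mem hp.1 hq.1
        have e : Ideal.Quotient.mk (IA k) (p + q) + σ (Ideal.Quotient.mk (IA k) (p + q)) =
            (Ideal.Quotient.mk (IA k) p + σ (Ideal.Quotient.mk (IA k) p)) +
            (Ideal.Quotient.mk (IA k) q + σ (Ideal.Quotient.mk (IA k) q)) := by
          simp only [map_add]; ring
        rw [e]; exact h
      · have h := add_mem hp.2 hq.2
        have e : iA k * (Ideal.Quotient.mk (IA k) (p + q) - σ (Ideal.Quotient.mk (IA k) (p + q))) =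
            iA k * (Ideal.Quotient.mk (IA k) p - σ (Ideal.Quotient.mk (IA k) p)) +
            iA k * (Ideal.Quotient.mk (IA k) q - σ (Ideal.Quotient.mk (IA k) q)) := by
          simp only [map_add]; ring
        rw [e]; exact h
    | mul_X p n hp =>
      fin_cases n
      · have hs := step (iA k) (Ideal.Quotient.mk (IA k) p) hσi him hp.1 hp.2
        simp only [map_mul] at hs ⊢; exact hs
      · have hs := step (xA k) (Ideal.Quotient.mk (IA k) p) hσx hxm hp.1 hp.2
        simp only [map_mul] at hs ⊢; exact hs
      · have hs := step (yA k) (Ideal.Quotient.mk (IA k) p) hσy hym hp.1 hp.2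
        simp only [map_mul] at hs ⊢; exact hs
      · have hs := step (zA k) (Ideal.Quotient.mk (IA k) p) hσz hzm hp.1 hp.2
        simp only [map_mul] at hs ⊢; exact hs
  refine ⟨hinj, Set.ext fun a => ⟨?_, ?_⟩⟩
  · rintro ⟨b, rfl⟩
    show σ (f b) = f b
    exact DFunLike.congr_fun hσf b
  · intro haa
    obtain ⟨p, rfl⟩ := Ideal.Quotient.mk_surjective a
    have hσa : σ (Ideal.Quotient.mk (IA k) p) = Ideal.Quotient.mk (IA k) p := haa
    have h1 := (key p).1
    rw [hσa] at h1
    have hu : IsUnit (2 : k) := by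
      simpa using IsLocalization.map_units (M := Submonoid.powers (2 : ℤ)) k ⟨2, ⟨1, by norm_num⟩⟩
    obtain ⟨u, hu2⟩ := hu
    have h2 := f.range.smul_mem h1 ((↑u⁻¹ : k))
    have e : ((↑u⁻¹ : k)) • (Ideal.Quotient.mk (IA k) p + Ideal.Quotient.mk (IA k) p) =
        Ideal.Quotient.mk (IA k) p := by
      rw [← two_smul k, smul_smul, ← hu2, Units.inv_mul, one_smul]
    rw [e] at h2
    obtain ⟨b, hb⟩ := h2
    exact ⟨b, hb⟩

end
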